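/- Let T be a tree with m edges. There exists a positive integer N such that for every n ≥ N there is an integer z < n²/2 with the property that every 2-edge coloring E(K_{n,n}) = R ⊔ B with more than z edges in each color class contains, for every integer r with 0 ≤ r ≤ m, a copy of T having exactly r red edges and m − r blue edges. In other words, every tree is bipartite omnitonal. -/

import Mathlib

/-- The number of red edges in a 2-edge coloring of `K_{n,n}`.  The coloring is encoded
as `c : Fin n → Fin n → Bool`, where `c v w = true` means that the edge between vertex `v`
of the first part and vertex `w` of the second part is red, and `c v w = false` means it
is blue. -/
def redTotal {n : ℕ} (c : Fin n → Fin n → Bool) : ℕ :=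
  (Finset.univ.filter fun p : Fin n × Fin n => c p.1 p.2 = true).card

/-- The number of blue edges in a 2-edge coloring of `K_{n,n}`. -/
def blueTotal {n : ℕ} (c : Fin n → Fin n → Bool) : ℕ :=
  (Finset.univ.filter fun p : Fin n × Fin n => c p.1 p.2 = false).card

/-- `redB c u v = true` iff `u` and `v` lie in different parts of `K_{n,n}` and the edge
between them is red (under the coloring `c : Fin n → Fin n → Bool`, where `c v w = true`
means the edge between vertex `v` of the first part and `w` of the second part is red). -/
def redB {n : ℕ} (c : Fin n → Fin n → Bool) : Fin n ⊕ Fin n → Fin n ⊕ Fin n → Bool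
  | Sum.inl v, Sum.inr w => c v w
  | Sum.inr w, Sum.inl v => c v w
  | _, _ => false

/-- `blueB c u v = true` iff `u` and `v` lie in different parts of `K_{n,n}` and the edge
between them is blue. -/
def blueB {n : ℕ} (c : Fin n → Fin n → Bool) : Fin n ⊕ Fin n → Fin n ⊕ Fin n → Bool
  | Sum.inl v, Sum.inr w => !c v w
  | Sum.inr w, Sum.inl v => !c v w
  | _, _ => false

/-- `crossB u v = true` iff `u` and `v` lie in different parts of `K_{n,n}`,
i.e. `u v` is an edge of `K_{n,n}`. -/
def crossB {n : ℕ} : Fin n ⊕ Fin n → Fin n ⊕ Fin n → Bool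
  | Sum.inl _, Sum.inr _ => true
  | Sum.inr _, Sum.inl _ => true
  | _, _ => false

/-- `redSym c` decides whether an edge of `K_{n,n}` (as an unordered pair of vertices in
`Fin n ⊕ Fin n`) joins the two parts and is colored red by `c`. -/
def redSym {n : ℕ} (c : Fin n → Fin n → Bool) : Sym2 (Fin n ⊕ Fin n) → Bool :=
  Sym2.lift ⟨redB c, by rintro (x | x) (y | y) <;> rfl⟩

/-- `blueSym c` decides whether an edge of `K_{n,n}` (as an unordered pair of vertices in
`Fin n ⊕ Fin n`) joins the two parts and is colored blue by `c`. -/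
def blueSym {n : ℕ} (c : Fin n → Fin n → Bool) : Sym2 (Fin n ⊕ Fin n) → Bool :=
  Sym2.lift ⟨blueB c, by rintro (x | x) (y | y) <;> rfl⟩

/-- `IsGraphCopy G f` says that `f` realizes a copy of the graph `G` in `K_{n,n}`
(a subgraph of `K_{n,n}` isomorphic to `G`): `f` is injective and maps every edge of `G`
to an edge of `K_{n,n}` (a pair of vertices in different parts). -/
def IsGraphCopy {n : ℕ} {γ : Type*} (G : SimpleGraph γ) (f : γ → Fin n ⊕ Fin n) : Prop :=
  Function.Injective f ∧ ∀ a b, G.Adj a b → crossB (f a) (f b) = true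

/-- The number of red edges of the copy of `G` realized by `f` in `K_{n,n}` colored
by `c`. -/
noncomputable def graphRedCount {n : ℕ} {γ : Type*} (c : Fin n → Fin n → Bool) (G : SimpleGraph γ)
    (f : γ → Fin n ⊕ Fin n) : ℕ :=
  {e ∈ G.edgeSet | redSym c (Sym2.map f e) = true}.ncard

/-- The number of blue edges of the copy of `G` realized by `f` in `K_{n,n}` colored
by `c`. -/
noncomputable def graphBlueCount {n : ℕ} {γ : Type*} (c : Fin n → Fin n → Bool) (G : SimpleGraph γ)
    (f : γ → Fin n ⊕ Fin n) : ℕ :=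
  {e ∈ G.edgeSet | blueSym c (Sym2.map f e) = true}.ncard

/-!
A proper 2-colouring of a forest with `m` edges has a colour class `A` in which every `r ≤ m` is
the degree sum of some `S ⊆ A`: otherwise both classes have a gap in their greedy subset sums, and
the heavy vertices beyond the two gaps would span more edges than a forest on them can have.

Suppose `t = |T|` rows of `K_{n,n}` are joined entirely in red to `t` columns and entirely in blue
to `t` other columns. Embedding the other class on these rows and `A` on the columns, with exactly
`S` on the red ones, gives a copy of `T` with `∑_{v ∈ S} deg v = r` red edges.

Such a split biclique exists, in the colouring or in its transpose, once both colours have density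
at least `1/4`, by Kővári–Sós–Turán counting: a red book on `bookSize t` rows either carries many
blue edges, and then contains a blue book, or most of its rows are almost entirely red. Doing the
same for blue, `t` almost red rows and `t` almost blue rows have `t` common columns on which they
are red and blue respectively.
-/

open Finset SimpleGraph

section CommonNeighbourhoods

variable {ι α : Type*} [Fintype α] [DecidableEq α]

lemma card_filter_apply_eq_apply_le (k : ℕ) {i j : Fin k} (hij : i ≠ j) :
    #{f : Fin k → α | f i = f j} ≤ Fintype.card α ^ (k - 1) := by
  calc #{f : Fin k → α | f i = f j}
      ≤ #(univ : Finset ({x // x ≠ j} → α)) := by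
        refine card_le_card_of_injOn (fun f x => f x) (fun _ _ => mem_coe.2 (mem_univ _)) ?_
        intro f hf g hg hfg
        funext x
        rcases eq_or_ne x j with rfl | hx
        · simp only [coe_filter, mem_univ, true_and, Set.mem_ofPred_eq] at hf hg
          rw [← hf, ← hg]
          exact congrFun hfg ⟨i, hij⟩
        · exact congrFun hfg ⟨x, hx⟩
    _ = Fintype.card α ^ (k - 1) := by simp [Fintype.card_subtype_compl]

lemma card_filter_not_injective_le (k : ℕ) :
    #{f : Fin k → α | ¬ Function.Injective f} ≤ k ^ 2 * Fintype.card α ^ (k - 1) := by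
  calc #{f : Fin k → α | ¬ Function.Injective f}
      ≤ #((univ : Finset (Fin k)).offDiag.biUnion fun p => {f : Fin k → α | f p.1 = f p.2}) := by
        refine card_le_card fun f hf => ?_
        simp only [Function.Injective, mem_filter, mem_univ, true_and, not_forall] at hf
        obtain ⟨i, j, hfij, hij⟩ := hf
        simp only [mem_biUnion, mem_offDiag, mem_univ, true_and, mem_filter]
        exact ⟨(i, j), hij, hfij⟩
    _ ≤ ∑ p ∈ (univ : Finset (Fin k)).offDiag, #{f : Fin k → α | f p.1 = f p.2} :=
        card_biUnion_le
    _ ≤ ∑ _p ∈ (univ : Finset (Fin k)).offDiag, Fintype.card α ^ (k - 1) :=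
        sum_le_sum fun p hp => card_filter_apply_eq_apply_le k (mem_offDiag.1 hp).2.2
    _ ≤ k ^ 2 * Fintype.card α ^ (k - 1) := by
        rw [sum_const, smul_eq_mul]
        gcongr
        calc #(univ : Finset (Fin k)).offDiag ≤ #(univ : Finset (Fin k)) ^ 2 := by
              rw [offDiag_card, sq]; exact Nat.sub_le _ _
          _ = k ^ 2 := by simp

lemma sum_card_pow_eq_sum_card_filter (R : Finset ι) (A : ι → Finset α) (k : ℕ) :
    ∑ x ∈ R, #(A x) ^ k = ∑ f : Fin k → α, #{x ∈ R | ∀ i, f i ∈ A x} := by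
  have hpi : ∀ x, #(A x) ^ k = #{f : Fin k → α | ∀ i, f i ∈ A x} := fun x => by
    rw [← Fintype.card_piFinset_const]
    congr 1
    ext f
    simp [Fintype.mem_piFinset]
  simp_rw [hpi, card_filter]
  exact sum_comm

/-- Kővári–Sós–Turán double counting: `∑ f, #{x ∈ R | ∀ i, f i ∈ A x} = ∑ x ∈ R, #(A x) ^ k` is
at least `(∑ x ∈ R, #(A x)) ^ k / #R ^ (k - 1)` by the power mean inequality, while the
non-injective `f` contribute at most `k ^ 2 * N ^ (k - 1) * #R` to it. -/
theorem exists_injective_le_card_filter_forall_mem {k : ℕ} (hk : 0 < k) (τ : ℕ)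
    (R : Finset ι) (A : ι → Finset α) (hR : #R ≤ Fintype.card α)
    (hbig : #R ^ (k - 1) * ((k ^ 2 + τ) * Fintype.card α ^ k) < (∑ x ∈ R, #(A x)) ^ k) :
    ∃ f : Fin k → α, Function.Injective f ∧ τ ≤ #{x ∈ R | ∀ i, f i ∈ A x} := by
  by_contra! hsmall
  set N := Fintype.card α
  have hcount : ∑ f : Fin k → α, #{x ∈ R | ∀ i, f i ∈ A x} ≤ (k ^ 2 + τ) * N ^ k := by
    rw [← sum_filter_add_sum_filter_not univ Function.Injective]
    have hinj : ∑ f : Fin k → α with Function.Injective f, #{x ∈ R | ∀ i, f i ∈ A x} ≤ τ * N ^ k :=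
      calc _ ≤ ∑ _f : Fin k → α, τ := by
              refine (sum_le_sum fun f hf => (hsmall f (mem_filter.1 hf).2).le).trans ?_
              exact sum_le_sum_of_subset (filter_subset _ _)
        _ = τ * N ^ k := by simp [mul_comm, N]
    have hnoninj : ∑ f : Fin k → α with ¬ Function.Injective f, #{x ∈ R | ∀ i, f i ∈ A x}
        ≤ k ^ 2 * N ^ k :=
      calc _ ≤ ∑ f : Fin k → α with ¬ Function.Injective f, #R :=
              sum_le_sum fun f _ => card_filter_le _ _
        _ ≤ k ^ 2 * N ^ (k - 1) * N := by
              rw [sum_const, smul_eq_mul]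
              exact Nat.mul_le_mul (card_filter_not_injective_le k) hR
        _ = k ^ 2 * N ^ k := by
              rw [mul_assoc, ← pow_succ, Nat.sub_add_cancel hk]
    linarith
  have hjensen : (∑ x ∈ R, #(A x)) ^ k ≤ #R ^ (k - 1) * ∑ x ∈ R, #(A x) ^ k := by
    obtain ⟨j, rfl⟩ : ∃ j, k = j + 1 := ⟨k - 1, by omega⟩
    simpa using pow_sum_le_card_mul_sum_pow (s := R) (f := fun x => #(A x))
      (fun _ _ => Nat.zero_le _) j
  rw [sum_card_pow_eq_sum_card_filter] at hjensen
  exact (hjensen.trans (Nat.mul_le_mul_left _ hcount)).not_gt hbig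

end CommonNeighbourhoods

def HasSplitBiclique {α β : Type*} (c : α → β → Bool) (t : ℕ) : Prop :=
  ∃ (X : Finset α) (Y₁ Y₂ : Finset β), t ≤ #X ∧ t ≤ #Y₁ ∧ t ≤ #Y₂ ∧ Disjoint Y₁ Y₂ ∧
    (∀ x ∈ X, ∀ y ∈ Y₁, c x y = true) ∧ (∀ x ∈ X, ∀ y ∈ Y₂, c x y = false)

lemma HasSplitBiclique.of_not {α β : Type*} {c : α → β → Bool} {t : ℕ}
    (h : HasSplitBiclique (fun x y => !c x y) t) : HasSplitBiclique c t := by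
  obtain ⟨X, Y₁, Y₂, hX, hY₁, hY₂, hdisj, h₁, h₂⟩ := h
  exact ⟨X, Y₂, Y₁, hX, hY₂, hY₁, hdisj.symm, fun x hx y hy => by simpa using h₂ x hx y hy,
    fun x hx y hy => by simpa using h₁ x hx y hy⟩

section Density

variable {n : ℕ}

lemma redTotal_eq_sum_card_filter (c : Fin n → Fin n → Bool) :
    redTotal c = ∑ y, #{x | c x y = true} := by
  rw [redTotal, card_filter, ← univ_product_univ, sum_product, sum_comm]
  simp_rw [card_filter]

lemma redTotal_not (c : Fin n → Fin n → Bool) : redTotal (fun x y => !c x y) = blueTotal c := by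
  simp [redTotal, blueTotal]

lemma card_filter_true_add_card_filter_false (c : Fin n → Fin n → Bool) (x : Fin n) :
    #{y | c x y = true} + #{y | c x y = false} = n := by
  simpa using card_filter_add_card_filter_not (s := univ) (p := fun y => c x y = true)

lemma card_lt_two_mul_card_filter_le {ι : Type*} {X : Finset ι} (hX : X.Nonempty) (g : ι → ℕ)
    (M : ℕ) (h : 2 * ∑ x ∈ X, g x ≤ #X * M) : #X < 2 * #{x ∈ X | g x ≤ M} := by
  have hsplit := card_filter_add_card_filter_not (s := X) (p := fun x => g x ≤ M)
  have hbad : #{x ∈ X | ¬ g x ≤ M} * (M + 1) ≤ ∑ x ∈ X, g x :=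
    calc #{x ∈ X | ¬ g x ≤ M} * (M + 1) = ∑ x ∈ X with ¬ g x ≤ M, (M + 1) := by
          rw [sum_const, smul_eq_mul]
      _ ≤ ∑ x ∈ X with ¬ g x ≤ M, g x := sum_le_sum fun x hx => by
          have := (mem_filter.1 hx).2; omega
      _ ≤ ∑ x ∈ X, g x := sum_le_sum_of_subset (filter_subset _ _)
  have hpos := hX.card_pos
  nlinarith

def bookSize (t : ℕ) : ℕ := (t ^ 2 + t) * (8 * t) ^ t

def splitBicliqueThreshold (t : ℕ) : ℕ := 4 ^ bookSize t * (bookSize t ^ 2 + t)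

lemma two_mul_le_bookSize (t : ℕ) : 2 * t ≤ bookSize t := by
  rcases Nat.eq_zero_or_pos t with rfl | ht
  · simp
  calc 2 * t ≤ (t ^ 2 + t) * 1 := by nlinarith
    _ ≤ bookSize t := Nat.mul_le_mul_left _ (Nat.one_le_pow _ _ (by omega))

lemma bookSize_le_splitBicliqueThreshold (t : ℕ) : bookSize t ≤ splitBicliqueThreshold t :=
  (Nat.le_mul_of_pos_left _ (by positivity)).trans (Nat.mul_le_mul_left _ (by nlinarith))

lemma pow_mul_lt_pow_of_four_pow_mul_lt {s a N E : ℕ} (hs : 0 < s) (hN : 4 ^ s * a < N)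
    (hE : N ^ 2 ≤ 4 * E) : N ^ (s - 1) * (a * N ^ s) < E ^ s := by
  have hpow : N ^ (s - 1) * N ^ s * N = (N ^ 2) ^ s := by
    rw [← pow_mul, mul_assoc, ← pow_succ, ← pow_add]; congr 1; omega
  have hNpos : 0 < N := by omega
  refine lt_of_mul_lt_mul_left (a := 4 ^ s) ?_ (Nat.zero_le _)
  calc 4 ^ s * (N ^ (s - 1) * (a * N ^ s)) = (4 ^ s * a) * (N ^ (s - 1) * N ^ s) := by ring
    _ < N * (N ^ (s - 1) * N ^ s) :=
        Nat.mul_lt_mul_of_pos_right hN (by positivity)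
    _ = (N ^ 2) ^ s := by rw [← hpow]; ring
    _ ≤ (4 * E) ^ s := Nat.pow_le_pow_left hE s
    _ = 4 ^ s * E ^ s := mul_pow _ _ _

lemma bookSize_pow_mul_lt_pow {t N E : ℕ} (ht : 0 < t) (h : bookSize t * N < 8 * t * E) :
    bookSize t ^ (t - 1) * ((t ^ 2 + t) * N ^ t) < E ^ t := by
  refine lt_of_mul_lt_mul_left (a := (8 * t) ^ t) ?_ (Nat.zero_le _)
  calc (8 * t) ^ t * (bookSize t ^ (t - 1) * ((t ^ 2 + t) * N ^ t))
      = bookSize t ^ (t - 1 + 1) * N ^ t := by rw [pow_succ, bookSize]; ring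
    _ = (bookSize t * N) ^ t := by rw [Nat.sub_add_cancel ht, mul_pow]
    _ < (8 * t * E) ^ t := Nat.pow_lt_pow_left h ht.ne'
    _ = (8 * t) ^ t * E ^ t := mul_pow _ _ _

end Density

section SplitBicliqueExistence

variable {n t : ℕ}

lemma hasSplitBiclique_of_forall_true_of_many_false (c : Fin n → Fin n → Bool) (ht : 0 < t)
    {X C : Finset (Fin n)} (hC : t ≤ #C) (hXC : ∀ x ∈ X, ∀ y ∈ C, c x y = true)
    (hX : #X ≤ n)
    (hfalse : #X ^ (t - 1) * ((t ^ 2 + t) * n ^ t) < (∑ x ∈ X, #{y | c x y = false}) ^ t) :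
    HasSplitBiclique c t := by
  obtain ⟨g, hg, hXg⟩ := exists_injective_le_card_filter_forall_mem ht t X
    (fun x => {y | c x y = false}) (by simpa using hX) (by simpa using hfalse)
  set X' := {x ∈ X | ∀ i, g i ∈ ({y | c x y = false} : Finset (Fin n))}
  have hX'g : ∀ x ∈ X', ∀ y ∈ univ.map ⟨g, hg⟩, c x y = false := by
    intro x hx y hy
    obtain ⟨i, -, rfl⟩ := mem_map.1 hy
    simpa using (mem_filter.1 hx).2 i
  obtain ⟨x₀, hx₀⟩ : X'.Nonempty := card_pos.1 (by omega)
  refine ⟨X', C, univ.map ⟨g, hg⟩, hXg, hC, by simp, ?_,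
    fun x hx => hXC x (mem_filter.1 hx).1, hX'g⟩
  refine disjoint_left.2 fun y hyC hyg => ?_
  have := hXC x₀ (mem_filter.1 hx₀).1 y hyC
  simp [hX'g x₀ hx₀ y hyg] at this

theorem hasSplitBiclique_or_exists_rows_few_false (c : Fin n → Fin n → Bool) (ht : 0 < t)
    (hn : splitBicliqueThreshold t < n) (hred : n ^ 2 ≤ 4 * redTotal c) :
    HasSplitBiclique c t ∨
      ∃ X : Finset (Fin n), #X = t ∧ ∀ x ∈ X, 4 * t * #{y | c x y = false} ≤ n := by
  set s := bookSize t
  have hst : 2 * t ≤ s := two_mul_le_bookSize t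
  have hsn : s ≤ n := (bookSize_le_splitBicliqueThreshold t).trans hn.le
  obtain ⟨f, hf, hC⟩ := exists_injective_le_card_filter_forall_mem (k := s) (by omega) t univ
    (fun y => {x | c x y = true}) (by simp)
    (by simpa [← redTotal_eq_sum_card_filter] using
      pow_mul_lt_pow_of_four_pow_mul_lt (by omega) hn hred)
  set X := univ.map ⟨f, hf⟩
  have hX : #X = s := by simp [X]
  by_cases hmany : s * n < 8 * t * ∑ x ∈ X, #{y | c x y = false}
  · refine .inl (hasSplitBiclique_of_forall_true_of_many_false c ht hC ?_ (hX.le.trans hsn)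
      (hX ▸ bookSize_pow_mul_lt_pow ht hmany))
    intro x hx y hy
    obtain ⟨i, -, rfl⟩ := mem_map.1 hx
    simpa using (mem_filter.1 hy).2 i
  · have hgood := card_lt_two_mul_card_filter_le (X := X) (card_pos.1 (by omega))
      (fun x => 4 * t * #{y | c x y = false}) n (by rw [← mul_sum, hX]; linarith)
    obtain ⟨Y, hYgood, hY⟩ :=
      exists_subset_card_eq (s := {x ∈ X | 4 * t * #{y | c x y = false} ≤ n}) (n := t) (by omega)
    exact .inr ⟨Y, hY, fun x hx => (mem_filter.1 (hYgood hx)).2⟩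

lemma four_mul_card_biUnion_le (X : Finset (Fin n)) (hX : #X = t)
    (Y : Fin n → Finset (Fin n)) (hY : ∀ x ∈ X, 4 * t * #(Y x) ≤ n) :
    4 * #(X.biUnion Y) ≤ n := by
  rcases Nat.eq_zero_or_pos t with rfl | ht
  · simp_all
  refine Nat.le_of_mul_le_mul_left ?_ ht
  calc t * (4 * #(X.biUnion Y)) ≤ t * (4 * ∑ x ∈ X, #(Y x)) := by gcongr; exact card_biUnion_le
    _ = ∑ x ∈ X, 4 * t * #(Y x) := by
        rw [mul_sum, mul_sum]; exact sum_congr rfl fun _ _ => by ring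
    _ ≤ ∑ _x ∈ X, n := sum_le_sum hY
    _ = t * n := by rw [sum_const, hX, smul_eq_mul]

theorem hasSplitBiclique_transpose_of_rows (c : Fin n → Fin n → Bool) (ht : 0 < t)
    (hn : 2 * t ≤ n) {X₁ X₂ : Finset (Fin n)} (h₁ : #X₁ = t) (h₂ : #X₂ = t)
    (hX₁ : ∀ x ∈ X₁, 4 * t * #{y | c x y = false} ≤ n)
    (hX₂ : ∀ x ∈ X₂, 4 * t * #{y | c x y = true} ≤ n) :
    HasSplitBiclique (fun y x => c x y) t := by
  have hdisj : Disjoint X₁ X₂ := by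
    refine disjoint_left.2 fun x hx₁ hx₂ => ?_
    have := card_filter_true_add_card_filter_false c x
    have := hX₁ x hx₁
    have := hX₂ x hx₂
    nlinarith
  set good : Finset (Fin n) := {y | (∀ x ∈ X₁, c x y = true) ∧ ∀ x ∈ X₂, c x y = false}
  have hbad : goodᶜ ⊆ X₁.biUnion (fun x => {y | c x y = false}) ∪
      X₂.biUnion (fun x => {y | c x y = true}) := by
    intro y hy
    simp only [good, mem_compl, mem_filter, mem_univ, true_and, not_and_or, not_forall] at hy
    simp only [mem_union, mem_biUnion, mem_filter, mem_univ, true_and]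
    rcases hy with ⟨x, hx, hxy⟩ | ⟨x, hx, hxy⟩
    · exact .inl ⟨x, hx, by simpa using hxy⟩
    · exact .inr ⟨x, hx, by simpa using hxy⟩
  have hgood : t ≤ #good := by
    have h₁ := four_mul_card_biUnion_le X₁ h₁ _ hX₁
    have h₂ := four_mul_card_biUnion_le X₂ h₂ _ hX₂
    have := (card_le_card hbad).trans (card_union_le _ _)
    have := card_compl_add_card good
    simp only [Fintype.card_fin] at this
    omega
  refine ⟨good, X₁, X₂, hgood, h₁.ge, h₂.ge, hdisj, fun y hy x hx => ?_, fun y hy x hx => ?_⟩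
  · exact (mem_filter.1 hy).2.1 x hx
  · exact (mem_filter.1 hy).2.2 x hx

theorem hasSplitBiclique_or_transpose (c : Fin n → Fin n → Bool) (ht : 0 < t)
    (hn : splitBicliqueThreshold t < n) (hred : n ^ 2 ≤ 4 * redTotal c)
    (hblue : n ^ 2 ≤ 4 * blueTotal c) :
    HasSplitBiclique c t ∨ HasSplitBiclique (fun y x => c x y) t := by
  rcases hasSplitBiclique_or_exists_rows_few_false c ht hn hred with h | ⟨X₁, h₁, hX₁⟩
  · exact .inl h
  rcases hasSplitBiclique_or_exists_rows_few_false (fun x y => !c x y) ht hn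
    (redTotal_not c ▸ hblue) with h | ⟨X₂, h₂, hX₂⟩
  · exact .inl h.of_not
  have h2t : 2 * t ≤ n :=
    (two_mul_le_bookSize t).trans ((bookSize_le_splitBicliqueThreshold t).trans hn.le)
  exact .inr (hasSplitBiclique_transpose_of_rows c ht h2t h₁ h₂ hX₁ (by simpa using hX₂))

end SplitBicliqueExistence

section Copies

variable {n : ℕ} {γ : Type*}

lemma redB_comm (c : Fin n → Fin n → Bool) (u v : Fin n ⊕ Fin n) : redB c u v = redB c v u := by
  rcases u with u | u <;> rcases v with v | v <;> rfl

lemma blueB_comm (c : Fin n → Fin n → Bool) (u v : Fin n ⊕ Fin n) :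
    blueB c u v = blueB c v u := by
  rcases u with u | u <;> rcases v with v | v <;> rfl

lemma crossB_comm (u v : Fin n ⊕ Fin n) : crossB u v = crossB v u := by
  rcases u with u | u <;> rcases v with v | v <;> rfl

lemma redB_swap (c : Fin n → Fin n → Bool) (u v : Fin n ⊕ Fin n) :
    redB c u.swap v.swap = redB (fun y x => c x y) u v := by
  rcases u with u | u <;> rcases v with v | v <;> rfl

lemma blueB_swap (c : Fin n → Fin n → Bool) (u v : Fin n ⊕ Fin n) :
    blueB c u.swap v.swap = blueB (fun y x => c x y) u v := by
  rcases u with u | u <;> rcases v with v | v <;> rfl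

lemma crossB_swap (u v : Fin n ⊕ Fin n) : crossB u.swap v.swap = crossB u v := by
  rcases u with u | u <;> rcases v with v | v <;> rfl

lemma IsGraphCopy.swap_comp {G : SimpleGraph γ} {f : γ → Fin n ⊕ Fin n} (hf : IsGraphCopy G f) :
    IsGraphCopy G (Sum.swap ∘ f) :=
  ⟨Sum.swap_leftInverse.injective.comp hf.1, fun a b h => (crossB_swap _ _).trans (hf.2 a b h)⟩

lemma graphRedCount_swap_comp (c : Fin n → Fin n → Bool) (G : SimpleGraph γ)
    (f : γ → Fin n ⊕ Fin n) :
    graphRedCount c G (Sum.swap ∘ f) = graphRedCount (fun y x => c x y) G f := by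
  have hswap : ∀ e,
      redSym c (Sym2.map (Sum.swap ∘ f) e) = redSym (fun y x => c x y) (Sym2.map f e) :=
    fun e => by induction e with | _ x y => exact redB_swap c (f x) (f y)
  simp only [graphRedCount, hswap]

lemma graphBlueCount_swap_comp (c : Fin n → Fin n → Bool) (G : SimpleGraph γ)
    (f : γ → Fin n ⊕ Fin n) :
    graphBlueCount c G (Sum.swap ∘ f) = graphBlueCount (fun y x => c x y) G f := by
  have hswap : ∀ e,
      blueSym c (Sym2.map (Sum.swap ∘ f) e) = blueSym (fun y x => c x y) (Sym2.map f e) :=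
    fun e => by induction e with | _ x y => exact blueB_swap c (f x) (f y)
  simp only [graphBlueCount, hswap]

lemma exists_injective_mem_ite {β : Type*} [Fintype γ] [DecidableEq β] (p : γ → Prop)
    [DecidablePred p] {Y₁ Y₂ : Finset β} (hY₁ : Fintype.card γ ≤ #Y₁)
    (hY₂ : Fintype.card γ ≤ #Y₂) (hdisj : Disjoint Y₁ Y₂) :
    ∃ g : γ → β, Function.Injective g ∧ ∀ v, g v ∈ if p v then Y₁ else Y₂ := by
  obtain ⟨ι₁⟩ := Function.Embedding.nonempty_of_card_le (β := Y₁) (by simpa using hY₁)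
  obtain ⟨ι₂⟩ := Function.Embedding.nonempty_of_card_le (β := Y₂) (by simpa using hY₂)
  refine ⟨fun v => if p v then ι₁ v else ι₂ v, fun u v huv => ?_, fun v => ?_⟩
  · by_cases hu : p u <;> by_cases hv : p v <;>
      simp only [hu, hv, if_true, if_false] at huv
    · exact ι₁.injective (Subtype.ext huv)
    · exact absurd (huv ▸ (ι₁ u).2) (Finset.disjoint_right.1 hdisj (ι₂ v).2)
    · exact absurd (huv ▸ (ι₂ u).2) (Finset.disjoint_left.1 hdisj (ι₁ v).2)
    · exact ι₂.injective (Subtype.ext huv)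
  · by_cases hv : p v <;> simp [hv]

variable [Fintype γ] {G : SimpleGraph γ} [DecidableRel G.Adj]

lemma graphRedCount_eq_card_filter {c : Fin n → Fin n → Bool} {f : γ → Fin n ⊕ Fin n}
    {p : Sym2 γ → Prop} [DecidablePred p]
    (h : ∀ x y, G.Adj x y → (redB c (f x) (f y) = true ↔ p s(x, y))) :
    graphRedCount c G f = #{e ∈ G.edgeFinset | p e} := by
  rw [graphRedCount, ← Set.ncard_coe_finset]
  congr 1
  ext e
  induction e with
  | _ x y =>
    simp only [coe_filter, mem_edgeFinset, mem_edgeSet, Set.mem_ofPred_eq]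
    exact and_congr_right (h x y)

lemma graphBlueCount_eq_card_filter {c : Fin n → Fin n → Bool} {f : γ → Fin n ⊕ Fin n}
    {p : Sym2 γ → Prop} [DecidablePred p]
    (h : ∀ x y, G.Adj x y → (blueB c (f x) (f y) = true ↔ p s(x, y))) :
    graphBlueCount c G f = #{e ∈ G.edgeFinset | p e} := by
  rw [graphBlueCount, ← Set.ncard_coe_finset]
  congr 1
  ext e
  induction e with
  | _ x y =>
    simp only [coe_filter, mem_edgeFinset, mem_edgeSet, Set.mem_ofPred_eq]
    exact and_congr_right (h x y)

variable [DecidableEq γ]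

theorem HasSplitBiclique.exists_isGraphCopy (c : Fin n → Fin n → Bool)
    (hc : HasSplitBiclique c (Fintype.card γ)) (φ : G.Coloring Bool) (β : Bool) {S : Finset γ}
    (hS : ∀ v ∈ S, φ v = β) :
    ∃ f : γ → Fin n ⊕ Fin n, IsGraphCopy G f ∧
      graphRedCount c G f = #{e ∈ G.edgeFinset | ∃ v ∈ S, v ∈ e} ∧
      graphBlueCount c G f = #{e ∈ G.edgeFinset | ¬ ∃ v ∈ S, v ∈ e} := by
  obtain ⟨X, Y₁, Y₂, hX, hY₁, hY₂, hdisj, hXY₁, hXY₂⟩ := hc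
  obtain ⟨col, hcol, hcolY⟩ := exists_injective_mem_ite (· ∈ S) hY₁ hY₂ hdisj
  obtain ⟨row⟩ := Function.Embedding.nonempty_of_card_le (β := X) (by simpa using hX)
  have hcolor : ∀ x y, c (row y) (col x) = decide (x ∈ S) := by
    intro x y
    have hx := hcolY x
    split_ifs at hx with hxS
    · simp [hxS, hXY₁ _ (row y).2 _ hx]
    · simp [hxS, hXY₂ _ (row y).2 _ hx]
  set f : γ → Fin n ⊕ Fin n := fun v => if φ v = β then .inr (col v) else .inl (row v)
  have hedge : ∀ x y, G.Adj x y → crossB (f x) (f y) = true ∧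
      redB c (f x) (f y) = decide (x ∈ S ∨ y ∈ S) ∧
      blueB c (f x) (f y) = !decide (x ∈ S ∨ y ∈ S) := by
    intro x y hxy
    wlog hx : φ x = β generalizing x y
    · have hy : φ y = β := by
        have := φ.valid hxy
        cases β <;> cases hφx : φ x <;> cases hφy : φ y <;> simp_all
      simpa only [crossB_comm, redB_comm, blueB_comm, or_comm] using this y x hxy.symm hy
    have hy : φ y ≠ β := fun hy => φ.valid hxy (hx.trans hy.symm)
    have hyS : y ∉ S := fun h => hy (hS y h)
    simp only [f, hx, hy, if_true, if_false, crossB, redB, blueB, hcolor, hyS, or_false,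
      and_self]
  have hmem : ∀ x y, (∃ v ∈ S, v ∈ s(x, y)) ↔ x ∈ S ∨ y ∈ S := fun x y => by
    simp only [Sym2.mem_iff, and_or_left, exists_or, exists_eq_right]
  refine ⟨f, ⟨fun u v huv => ?_, fun x y h => (hedge x y h).1⟩,
    graphRedCount_eq_card_filter fun x y h => ?_, graphBlueCount_eq_card_filter fun x y h => ?_⟩
  · by_cases hu : φ u = β <;> by_cases hv : φ v = β <;>
      simp only [f, hu, hv, if_true, if_false, Sum.inr.injEq, Sum.inl.injEq, reduceCtorEq] at huv
    · exact hcol huv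
    · exact row.injective (Subtype.ext huv)
  · rw [(hedge x y h).2.1, hmem, decide_eq_true_iff]
  · rw [(hedge x y h).2.2, hmem, Bool.not_eq_true', decide_eq_false_iff_not]

end Copies

/-- Take `P` of maximal size among the subsets of `W` all of whose partial sums `0, …, ∑ P` are
realised: a `v ∈ W \ P` with `w v ≤ ∑ P + 1` could be added to `P`. -/
lemma exists_subset_sum_eq_or_gap {ι : Type*} [DecidableEq ι] (W : Finset ι) (w : ι → ℕ) :
    (∀ r ≤ ∑ v ∈ W, w v, ∃ S ⊆ W, ∑ v ∈ S, w v = r) ∨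
      ∃ P ⊆ W, (W \ P).Nonempty ∧ ∀ v ∈ W \ P, ∑ u ∈ P, w u + 2 ≤ w v := by
  set F := W.powerset.filter fun P => ∀ r ≤ ∑ v ∈ P, w v, ∃ S ⊆ P, ∑ v ∈ S, w v = r
  have hempty : ∅ ∈ F := by
    simp only [F, mem_filter, empty_mem_powerset, sum_empty, nonpos_iff_eq_zero, true_and]
    rintro r rfl
    exact ⟨∅, subset_rfl, sum_empty⟩
  obtain ⟨P, hPF, hPmax⟩ := exists_max_image F card ⟨∅, hempty⟩
  obtain ⟨hPW, hP⟩ := mem_filter.1 hPF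
  rw [mem_powerset] at hPW
  by_cases hWP : W ⊆ P
  · exact .inl (subset_antisymm hPW hWP ▸ hP)
  refine .inr ⟨P, hPW, sdiff_nonempty.2 hWP, fun v hv => ?_⟩
  by_contra! hsmall
  obtain ⟨hvW, hvP⟩ := mem_sdiff.1 hv
  have hins : insert v P ∈ F := by
    refine mem_filter.2 ⟨mem_powerset.2 (insert_subset hvW hPW), fun r hr => ?_⟩
    rw [sum_insert hvP] at hr
    by_cases hrP : r ≤ ∑ u ∈ P, w u
    · obtain ⟨S, hSP, hS⟩ := hP r hrP
      exact ⟨S, hSP.trans (subset_insert _ _), hS⟩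
    · obtain ⟨S, hSP, hS⟩ := hP (r - w v) (by omega)
      refine ⟨insert v S, insert_subset_insert _ hSP, ?_⟩
      rw [sum_insert fun h => hvP (hSP h), hS]
      omega
  have := hPmax _ hins
  rw [card_insert_of_notMem hvP] at this
  omega

lemma sum_add_card_sdiff_mul_le_of_gap {ι : Type*} [DecidableEq ι] {W P : Finset ι} {w : ι → ℕ}
    (hPW : P ⊆ W) (hgap : ∀ v ∈ W \ P, ∑ u ∈ P, w u + 2 ≤ w v) :
    ∑ u ∈ P, w u + #(W \ P) * (∑ u ∈ P, w u + 2) ≤ ∑ v ∈ W, w v := by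
  rw [← sum_sdiff hPW, add_comm]
  gcongr
  simpa using card_nsmul_le_sum (W \ P) w _ hgap

namespace SimpleGraph

variable {V : Type*} [Fintype V] [DecidableEq V] {G : SimpleGraph V} [DecidableRel G.Adj]

lemma IsAcyclic.card_edgeFinset_inter_sym2_lt (hG : G.IsAcyclic) {U : Finset V}
    (hU : U.Nonempty) : #(G.edgeFinset ∩ U.sym2) < #U := by
  rw [← filter_edgeFinset_toFinset_subset, card_filter_edgeFinset_toFinset_subset]
  have : Nonempty (U : Set V) := hU.to_subtype
  obtain ⟨F, hF, -, hFtree⟩ :=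
    connected_top.exists_isTree_le_of_le_of_isAcyclic le_top (hG.induce (U : Set V))
  classical
  calc #(G.induce (U : Set V)).edgeFinset ≤ #F.edgeFinset := card_le_card (edgeFinset_mono hF)
    _ < #U := by
        have := hFtree.card_edgeFinset
        simp only [coe_sort_coe, Fintype.card_coe] at this
        omega

lemma card_filter_exists_mem_eq_sum_degree {S : Finset V} (hS : G.IsIndepSet S) :
    #{e ∈ G.edgeFinset | ∃ v ∈ S, v ∈ e} = ∑ v ∈ S, G.degree v := by
  have hunion : {e ∈ G.edgeFinset | ∃ v ∈ S, v ∈ e} = S.biUnion (G.incidenceFinset ·) := by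
    ext e
    simp only [mem_filter, mem_biUnion, incidenceFinset_eq_filter]
    tauto
  rw [hunion, card_biUnion]
  · exact sum_congr rfl fun v _ => G.card_incidenceFinset_eq_degree v
  intro u hu v hv huv
  refine Finset.disjoint_left.2 fun e heu hev => ?_
  simp only [incidenceFinset_eq_filter, mem_filter] at heu hev
  have he : e = s(u, v) := (Sym2.mem_and_mem_iff huv).1 ⟨heu.2, hev.2⟩
  exact hS hu hv huv (by simpa [he] using heu.1)

lemma card_edgeFinset_le_sum_degree_add_card_inter_sym2 (P : Finset V) :
    #G.edgeFinset ≤ ∑ v ∈ P, G.degree v + #(G.edgeFinset ∩ Pᶜ.sym2) := by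
  calc #G.edgeFinset ≤ #(P.biUnion (G.incidenceFinset ·) ∪ (G.edgeFinset ∩ Pᶜ.sym2)) := by
        refine card_le_card fun e he => ?_
        by_cases hP : ∃ v ∈ e, v ∈ P
        · obtain ⟨v, hve, hvP⟩ := hP
          refine mem_union_left _ (mem_biUnion.2 ⟨v, hvP, ?_⟩)
          simp [incidenceFinset_eq_filter, he, hve]
        · push Not at hP
          exact mem_union_right _
            (mem_inter.2 ⟨he, mem_sym2_iff.2 fun v hv => mem_compl.2 (hP v hv)⟩)
    _ ≤ #(P.biUnion (G.incidenceFinset ·)) + #(G.edgeFinset ∩ Pᶜ.sym2) := card_union_le _ _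
    _ ≤ ∑ v ∈ P, G.degree v + #(G.edgeFinset ∩ Pᶜ.sym2) := by
        gcongr
        exact card_biUnion_le.trans_eq (sum_congr rfl fun v _ => G.card_incidenceFinset_eq_degree v)

lemma Coloring.sum_degree_colorClass (φ : G.Coloring Bool) (β : Bool) :
    ∑ v with φ v = β, G.degree v = #G.edgeFinset := by
  have hindep : G.IsIndepSet (({v | φ v = β} : Finset V) : Set V) := by
    simpa [Coloring.colorClass] using φ.isIndepSet_colorClass β
  rw [← card_filter_exists_mem_eq_sum_degree hindep, filter_true_of_mem]
  intro e he
  induction e with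
  | _ x y =>
    have hxy := φ.valid (mem_edgeFinset.1 he)
    by_cases hx : φ x = β
    · exact ⟨x, by simpa using hx, Sym2.mem_mk_left _ _⟩
    · refine ⟨y, ?_, Sym2.mem_mk_right _ _⟩
      simp only [mem_filter, mem_univ, true_and]
      cases β <;> cases hφx : φ x <;> cases hφy : φ y <;> simp_all

theorem IsAcyclic.exists_coloring_forall_exists_sum_degree_eq (hG : G.IsAcyclic) :
    ∃ (φ : G.Coloring Bool) (β : Bool), ∀ r ≤ #G.edgeFinset,
      ∃ S : Finset V, (∀ v ∈ S, φ v = β) ∧ ∑ v ∈ S, G.degree v = r := by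
  obtain ⟨φ₀⟩ := hG.colorable_two
  set φ := G.recolorOfEquiv finTwoEquiv φ₀
  refine ⟨φ, ?_⟩
  by_contra! hnot
  set W : Bool → Finset V := fun β => {v | φ v = β}
  have hgap : ∀ β, ∃ P ⊆ W β, (W β \ P).Nonempty ∧
      ∑ u ∈ P, G.degree u + #(W β \ P) * (∑ u ∈ P, G.degree u + 2) ≤ #G.edgeFinset := by
    intro β
    rcases exists_subset_sum_eq_or_gap (W β) (G.degree ·) with hcover | ⟨P, hPW, hne, hP⟩
    · obtain ⟨r, hr, hS⟩ := hnot β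
      obtain ⟨S, hSW, hSr⟩ := hcover r (by rwa [φ.sum_degree_colorClass])
      exact absurd hSr (hS S fun v hv => (mem_filter.1 (hSW hv)).2)
    · exact ⟨P, hPW, hne, φ.sum_degree_colorClass β ▸ sum_add_card_sdiff_mul_le_of_gap hPW hP⟩
  obtain ⟨P₁, hP₁, hne₁, h₁⟩ := hgap true
  obtain ⟨P₂, hP₂, hne₂, h₂⟩ := hgap false
  have hW : ∀ {v β}, v ∈ W β ↔ φ v = β := by simp [W]
  have hdisj : Disjoint P₁ P₂ :=
    Finset.disjoint_left.2 fun v hv₁ hv₂ => by simpa [hW.1 (hP₁ hv₁)] using hW.1 (hP₂ hv₂)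
  have hcompl : (P₁ ∪ P₂)ᶜ ⊆ (W true \ P₁) ∪ (W false \ P₂) := by
    intro v hv
    simp only [mem_compl, mem_union, not_or] at hv
    cases hφ : φ v
    · exact mem_union_right _ (mem_sdiff.2 ⟨hW.2 hφ, hv.2⟩)
    · exact mem_union_left _ (mem_sdiff.2 ⟨hW.2 hφ, hv.1⟩)
  have hforest : #(G.edgeFinset ∩ (P₁ ∪ P₂)ᶜ.sym2) < #(P₁ ∪ P₂)ᶜ := by
    refine hG.card_edgeFinset_inter_sym2_lt ?_
    obtain ⟨v, hv⟩ := hne₁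
    obtain ⟨hvW, hvP₁⟩ := mem_sdiff.1 hv
    refine ⟨v, mem_compl.2 fun hvP => ?_⟩
    rcases mem_union.1 hvP with h | h
    · exact hvP₁ h
    · simpa [hW.1 hvW] using hW.1 (hP₂ h)
  have hedges := card_edgeFinset_le_sum_degree_add_card_inter_sym2 (G := G) (P₁ ∪ P₂)
  rw [sum_union hdisj] at hedges
  have := (card_le_card hcompl).trans (card_union_le _ _)
  have := Nat.le_mul_of_pos_left (∑ u ∈ P₁, G.degree u) hne₁.card_pos
  have := Nat.le_mul_of_pos_left (∑ u ∈ P₂, G.degree u) hne₂.card_pos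
  nlinarith

theorem IsAcyclic.exists_isGraphCopy_graphRedCount_eq {n : ℕ} (hG : G.IsAcyclic)
    (c : Fin n → Fin n → Bool) (hc : HasSplitBiclique c (Fintype.card V)) {r : ℕ}
    (hr : r ≤ #G.edgeFinset) :
    ∃ f : V → Fin n ⊕ Fin n, IsGraphCopy G f ∧
      graphRedCount c G f = r ∧ graphBlueCount c G f = #G.edgeFinset - r := by
  obtain ⟨φ, β, hsums⟩ := hG.exists_coloring_forall_exists_sum_degree_eq
  obtain ⟨S, hSβ, hSr⟩ := hsums r hr
  obtain ⟨f, hf, hred, hblue⟩ := hc.exists_isGraphCopy c φ β hSβ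
  have hS : G.IsIndepSet S := (φ.isIndepSet_colorClass β).mono fun v hv => hSβ v hv
  have hmeet := card_filter_exists_mem_eq_sum_degree hS
  have hsplit := card_filter_add_card_filter_not (s := G.edgeFinset) (p := fun e => ∃ v ∈ S, v ∈ e)
  exact ⟨f, hf, by rw [hred, hmeet, hSr], by omega⟩

end SimpleGraph

/-- Every tree is bipartite omnitonal.  Let `T` be a tree with `m` edges.  There is `N`
such that for every `n ≥ N` there is an integer `z < n²/2` such that every 2-edge coloring
of `K_{n,n}` with more than `z` edges in each color class contains, for every
`0 ≤ r ≤ m`, a copy of `T` with exactly `r` red edges and `m - r` blue edges. -/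
theorem trees_bipartite_omnitonal {γ : Type*} [Fintype γ] (T : SimpleGraph γ)
    (hT : T.IsTree) (m : ℕ) (hm : T.edgeSet.ncard = m) :
    ∃ N : ℕ, 0 < N ∧ ∀ n : ℕ, N ≤ n → ∃ z : ℕ, 2 * z < n ^ 2 ∧
      ∀ c : Fin n → Fin n → Bool, z < redTotal c → z < blueTotal c →
        ∀ r : ℕ, r ≤ m →
          ∃ f : γ → Fin n ⊕ Fin n, IsGraphCopy T f ∧
            graphRedCount c T f = r ∧ graphBlueCount c T f = m - r := by
  classical
  set t := Fintype.card γ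
  have ht : 0 < t := Fintype.card_pos_iff.2 hT.connected.nonempty
  have hmE : #T.edgeFinset = m := by rw [← hm, ← coe_edgeFinset, Set.ncard_coe_finset]
  refine ⟨splitBicliqueThreshold t + 1, Nat.succ_pos _, fun n hn => ?_⟩
  have hn2 : 0 < n ^ 2 := pow_pos (by omega) 2
  refine ⟨(n ^ 2 - 1) / 2, by omega, fun c hred hblue r hr => ?_⟩
  rcases hasSplitBiclique_or_transpose c ht hn (by omega) (by omega) with hc | hc
  · exact hmE ▸ hT.isAcyclic.exists_isGraphCopy_graphRedCount_eq c hc (hmE ▸ hr)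
  · obtain ⟨f, hf, hfred, hfblue⟩ :=
      hT.isAcyclic.exists_isGraphCopy_graphRedCount_eq _ hc (hmE ▸ hr)
    exact ⟨Sum.swap ∘ f, hf.swap_comp, by rw [graphRedCount_swap_comp, hfred],
      by rw [graphBlueCount_swap_comp, hfblue, hmE]⟩
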